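/- For the λ=1/2 diploid PCA on (Z/2Z)^(Z/nZ), n ≥ 5, the all-zero configuration is the unique absorbing state: if y is a configuration with p(y,y) = 1, then y is identically zero. -/

import Mathlib

/-! Every factor of `ptrans n y y` lies in `[0, 1]`, so `ptrans n y y = 1` forces each site to
be updated deterministically to its own value. At site `j + 1` this reads
`y (j + 1) = y j + y (j + 1)`, hence `y j = 0`. -/

open Finset

/-- One-site update probability of the λ = 1/2 diploid PCA of ECA 60 and 102. -/
noncomputable def pLoc (n : ℕ) (x : ZMod n → ZMod 2) (i : ZMod n) (b : ZMod 2) : ℝ :=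
  if x (i - 1) = x (i + 1) then (if b = x (i - 1) + x i then 1 else 0) else 1 / 2

/-- Transition probability of the PCA: product of one-site probabilities. -/
noncomputable def ptrans (n : ℕ) [NeZero n] (x y : ZMod n → ZMod 2) : ℝ :=
  ∏ i : ZMod n, pLoc n x i (y i)

theorem Finset.eq_one_of_prod_eq_one_of_le_one {ι R : Type*} [CommSemiring R] [PartialOrder R]
    [IsOrderedRing R] {s : Finset ι} {f : ι → R} (h0 : ∀ i ∈ s, 0 ≤ f i)
    (h1 : ∀ i ∈ s, f i ≤ 1) (hprod : ∏ i ∈ s, f i = 1) {i : ι} (hi : i ∈ s) : f i = 1 := by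
  classical
  refine le_antisymm (h1 i hi) ?_
  calc 1 = f i * ∏ j ∈ s.erase i, f j := by rw [mul_prod_erase s f hi, hprod]
    _ ≤ f i := mul_le_of_le_one_right (h0 i hi) <|
        prod_le_one (fun j hj => h0 j (mem_of_mem_erase hj))
          (fun j hj => h1 j (mem_of_mem_erase hj))

section

variable {n : ℕ} {x y : ZMod n → ZMod 2}

theorem pLoc_nonneg (i : ZMod n) (b : ZMod 2) : 0 ≤ pLoc n x i b := by
  unfold pLoc; split_ifs <;> norm_num

theorem pLoc_le_one (i : ZMod n) (b : ZMod 2) : pLoc n x i b ≤ 1 := by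
  unfold pLoc; split_ifs <;> norm_num

theorem pLoc_eq_one_iff {i : ZMod n} {b : ZMod 2} :
    pLoc n x i b = 1 ↔ x (i - 1) = x (i + 1) ∧ b = x (i - 1) + x i := by
  unfold pLoc; split_ifs <;> simp_all

theorem pLoc_eq_one_of_ptrans_eq_one [NeZero n] (h : ptrans n x y = 1) (i : ZMod n) :
    pLoc n x i (y i) = 1 :=
  eq_one_of_prod_eq_one_of_le_one (fun j _ => pLoc_nonneg j (y j))
    (fun j _ => pLoc_le_one j (y j)) h (mem_univ i)

end

theorem zero_unique_absorbing_general (n : ℕ) [NeZero n]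
    (y : ZMod n → ZMod 2) (hy : ptrans n y y = 1) :
    y = fun _ => 0 := by
  funext j
  obtain ⟨-, hfix⟩ := pLoc_eq_one_iff.1 (pLoc_eq_one_of_ptrans_eq_one hy (j + 1))
  rw [add_sub_cancel_right] at hfix
  linear_combination -hfix

/-- The all-zero configuration is the unique absorbing state of the λ = 1/2
diploid PCA. -/
theorem zero_unique_absorbing (n : ℕ) [NeZero n] (hn : 5 ≤ n)
    (y : ZMod n → ZMod 2) (hy : ptrans n y y = 1) :
    y = fun _ => 0 :=
  zero_unique_absorbing_general n y hy
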